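/- arXiv:2407.16422 — 3 statements merged into one kernel-verified Lean document; each statement's English description precedes it below -/
import Mathlib

section
/- For the problem min (x₁+2)² + (x₂−1)² s.t. x₂³ − 3x₂ − g̃₁(x₁) ≤ 0 (with g̃₁ as in the paper's Example), quasinormality fails at x̄ = (−2,1): the multiplier v₁ = 1 > 0 satisfies 0 ∈ v₁·∂g₁(x̄) (since ∂g₁(−2,1) = [−9,0] × {0} contains 0), and for the sequence x^k = (−2 + 1/k, 1 + 1/k), one has v₁·g₁(x^k) = 1/k³ + 3/k² > 0 for all k ≥ 1, while x^k → x̄. -/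
open Filter Set Topology

lemma one_div_natCast_mem_Icc (k : ℕ) : 1 / (k : ℝ) ∈ Icc (0 : ℝ) 1 := by
  rcases k.eq_zero_or_pos with rfl | hk
  · simp
  · exact ⟨by positivity, (div_le_one (by positivity)).mpr (by exact_mod_cast hk)⟩

lemma cubic_shift_sub_neg_two (t : ℝ) : (1 + t) ^ 3 - 3 * (1 + t) - (-2) = t ^ 3 + 3 * t ^ 2 := by
  ring

lemma tendsto_add_one_div_natCast_prod (a b : ℝ) :
    Tendsto (fun k : ℕ => ((a + 1 / k, b + 1 / k) : ℝ × ℝ)) atTop (𝓝 (a, b)) := by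
  have h := tendsto_one_div_atTop_nhds_zero_nat (𝕜 := ℝ)
  simpa using (tendsto_const_nhds.add h).prodMk_nhds (tendsto_const_nhds.add h)

/-- Quasinormality fails at x̄ = (-2,1): with multiplier v₁ = 1 > 0, 0 belongs to
v₁·∂g₁(x̄) = [-9,0] × {0}, and the sequence x^k = (-2+1/k, 1+1/k) converges to x̄
with v₁·g₁(x^k) = 1/k³ + 3/k² > 0 for all k ≥ 1. -/
theorem quasinormality_fails_example :
    let gtil : ℝ → ℝ := fun x₁ => if x₁ ∈ Set.Icc (-2 : ℝ) 1 then -2 else x₁ ^ 3 - 3 * x₁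
    let g₁ : ℝ → ℝ → ℝ := fun x₁ x₂ => x₂ ^ 3 - 3 * x₂ - gtil x₁
    ((0, 0) : ℝ × ℝ) ∈ (fun s : ℝ × ℝ => (1 : ℝ) • s) '' (Set.Icc (-9 : ℝ) 0 ×ˢ ({0} : Set ℝ)) ∧
    (∀ k : ℕ, 1 ≤ k →
      (1 : ℝ) * g₁ (-2 + 1 / k) (1 + 1 / k) = 1 / (k : ℝ) ^ 3 + 3 / (k : ℝ) ^ 2 ∧
      0 < (1 : ℝ) * g₁ (-2 + 1 / k) (1 + 1 / k)) ∧
    Tendsto (fun k : ℕ => ((-2 + 1 / k, 1 + 1 / k) : ℝ × ℝ)) atTop (nhds (-2, 1)) := by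
  intro gtil g₁
  -- `x^k` stays on the plateau `[-2, 1]` of `gtil`, where `g₁` is a shifted cubic in `1/k`.
  have hg (k : ℕ) : g₁ (-2 + 1 / k) (1 + 1 / k) = 1 / (k : ℝ) ^ 3 + 3 / (k : ℝ) ^ 2 := by
    have hplateau : -2 + 1 / (k : ℝ) ∈ Icc (-2 : ℝ) 1 := by
      obtain ⟨h0, h1⟩ := one_div_natCast_mem_Icc k
      constructor <;> linarith
    simp only [g₁, gtil, if_pos hplateau, cubic_shift_sub_neg_two, one_div_pow, mul_one_div]
  refine ⟨⟨(0, 0), ⟨⟨by norm_num, le_rfl⟩, rfl⟩, by simp⟩, fun k hk => ⟨?_, ?_⟩,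
    tendsto_add_one_div_natCast_prod _ _⟩
  · rw [one_mul, hg]
  · have : (0 : ℝ) < k := by exact_mod_cast hk
    rw [one_mul, hg]
    positivity
end

section
/- For the problem min (x₁+x₂)x₁ s.t. g₁ = x₁x₂ ≤ 0, g₂ = −x₁x₂ ≤ 0, g₃ = −x₁ ≤ 0, the cone-continuity property fails at x̄ = (0,1). Specifically: K(x̄) = {Σ_{j∈{1,2,3}} v_j ∇g_j(x̄) | v_j ≥ 0} = ℝ × {0}, and for x^k = (1/k, 1), the combination 2k∇g₁(x^k) + k∇g₂(x^k) + k∇g₃(x^k) = (0,1) for every k ≥ 1, so (0,1) lies in limsup_{x→x̄} K(x) but (0,1) ∉ K(x̄). -/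
/-!
At x̄ = (0,1) the gradients of g₁, g₂, g₃ are (1,0), (-1,0), (-1,0), which span exactly the
x₁-axis as a cone. At xᵏ = (1/k, 1) the gradients of g₁ and g₂ acquire second components
±1/k, and weights of order k blow these up to the vector (0,1), which lies off that axis.
-/

theorem exists_nonneg_smul_add_smul_neg {R M : Type*} [Ring R] [LinearOrder R] [IsOrderedRing R]
    [AddCommGroup M] [Module R M] (t : R) (u : M) :
    ∃ a b : R, 0 ≤ a ∧ 0 ≤ b ∧ t • u = a • u + b • -u := by
  rcases le_total 0 t with ht | ht
  · exact ⟨t, 0, ht, le_rfl, by simp⟩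
  · exact ⟨0, -t, le_rfl, neg_nonneg.2 ht, by simp⟩

theorem nonneg_combination_axis_gradients_eq :
    {z : ℝ × ℝ | ∃ v₁ v₂ v₃ : ℝ, 0 ≤ v₁ ∧ 0 ≤ v₂ ∧ 0 ≤ v₃ ∧
        z = v₁ • ((1, 0) : ℝ × ℝ) + v₂ • ((-1, 0) : ℝ × ℝ) + v₃ • ((-1, 0) : ℝ × ℝ)}
      = Set.univ ×ˢ ({0} : Set ℝ) := by
  ext ⟨a, b⟩
  simp only [Set.mem_ofPred_eq, Set.mem_prod, Set.mem_univ, Set.mem_singleton_iff, true_and]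
  constructor
  · rintro ⟨v₁, v₂, v₃, -, -, -, hz⟩
    simpa using congrArg Prod.snd hz
  · rintro rfl
    obtain ⟨v₁, v₂, hv₁, hv₂, hz⟩ := exists_nonneg_smul_add_smul_neg a ((1, 0) : ℝ × ℝ)
    refine ⟨v₁, v₂, 0, hv₁, hv₂, le_rfl, ?_⟩
    simpa using hz

theorem two_smul_add_smul_add_smul_eq (k : ℝ) (hk : k ≠ 0) :
    (2 * k) • ((1, 1 / k) : ℝ × ℝ) + k • ((-1, -(1 / k)) : ℝ × ℝ) + k • ((-1, 0) : ℝ × ℝ)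
      = (0, 1) := by
  ext
  · simp only [Prod.fst_add, Prod.smul_fst, smul_eq_mul]
    ring
  · simp only [Prod.snd_add, Prod.smul_snd, smul_eq_mul]
    field_simp
    ring

/-- CCP fails at x̄ = (0,1): K(x̄) = ℝ × {0}, the combination
2k∇g₁(x^k) + k∇g₂(x^k) + k∇g₃(x^k) at x^k = (1/k,1) equals (0,1) for all k ≥ 1,
and (0,1) ∉ K(x̄). -/
theorem ccp_fails_example :
    {z : ℝ × ℝ | ∃ v₁ v₂ v₃ : ℝ, 0 ≤ v₁ ∧ 0 ≤ v₂ ∧ 0 ≤ v₃ ∧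
        z = v₁ • ((1, 0) : ℝ × ℝ) + v₂ • ((-1, 0) : ℝ × ℝ) + v₃ • ((-1, 0) : ℝ × ℝ)}
      = Set.univ ×ˢ ({0} : Set ℝ) ∧
    (∀ k : ℕ, 1 ≤ k →
      (2 * k : ℝ) • ((1, 1 / k) : ℝ × ℝ) + (k : ℝ) • ((-1, -(1 / k)) : ℝ × ℝ)
        + (k : ℝ) • ((-1, 0) : ℝ × ℝ) = (0, 1)) ∧
    ((0, 1) : ℝ × ℝ) ∉ Set.univ ×ˢ ({0} : Set ℝ) :=
  ⟨nonneg_combination_axis_gradients_eq,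
    fun k hk => two_smul_add_smul_add_smul_eq k (by positivity),
    by simp⟩
end

section
/- The sequence (x^k, y^k, v^k, w^k, δ̂^k, γ_k, ε^k) = (0, (0, −1/k), (0,0), 0, (0,0), 1/k, (0,0,0)) satisfies the perturbed KKT (AKKT) system of the lower-level value function reformulation of the bilevel problem with F(x,y) = x y₁, f̂(x,y) = −x²y₂, ĝ₁ = y₂, ĝ₂ = −x y₁ + y₂, φ ≡ 0, at the point (x̄, ȳ) = (0,(0,0)): for every k, ε^k = ∇F + v₁^k∇ĝ₁ + v₂^k∇ĝ₂ + w^k∇(f̂ − φ) evaluated at (x^k,y^k), with v^k ≥ 0, ĝ(x^k,y^k) ≤ δ̂^k, complementarity, w^k ≥ 0, f̂(x^k,y^k) − φ(x^k) ≤ γ_k with complementarity, and (x^k, y^k, δ̂^k, γ_k, ε^k) → (0, (0,0), 0, 0, 0). Moreover all perturbed active index sets are empty: y₂^k = −1/k < 0 = δ̂₁^k, −x^k y₁^k + y₂^k = −1/k < 0 = δ̂₂^k, and −(x^k)²y₂^k = 0 < 1/k = γ_k. -/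
open Filter

/-- The sequence (x^k,y^k,v^k,w^k,δ̂^k,γ_k,ε^k) = (0,(0,-1/k),(0,0),0,(0,0),1/k,0)
satisfies the perturbed KKT (AKKT) system of the LLVFR of the bilevel example at
(x̄,ȳ) = (0,(0,0)), with all perturbed active index sets empty. -/
theorem llvfr_akkt_sequence_example :
    let x : ℕ → ℝ := fun _ => 0
    let y : ℕ → ℝ × ℝ := fun k => (0, -(1 / k))
    let v : ℕ → ℝ × ℝ := fun _ => (0, 0)
    let w : ℕ → ℝ := fun _ => 0
    let δ : ℕ → ℝ × ℝ := fun _ => (0, 0)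
    let γ : ℕ → ℝ := fun k => 1 / k
    let ε : ℕ → ℝ × ℝ × ℝ := fun _ => (0, 0, 0)
    (∀ k : ℕ, 1 ≤ k →
      -- stationarity: ε^k = ∇F + v₁^k ∇ĝ₁ + v₂^k ∇ĝ₂ + w^k ∇(f̂ - φ) at (x^k, y^k)
      ε k = (((y k).1, x k, 0) : ℝ × ℝ × ℝ)
          + (v k).1 • ((0, 0, 1) : ℝ × ℝ × ℝ)
          + (v k).2 • ((-(y k).1, -(x k), 1) : ℝ × ℝ × ℝ)
          + w k • ((-2 * x k * (y k).2, 0, -(x k) ^ 2) : ℝ × ℝ × ℝ) ∧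
      0 ≤ (v k).1 ∧ 0 ≤ (v k).2 ∧ 0 ≤ w k ∧
      (y k).2 ≤ (δ k).1 ∧
      -(x k) * (y k).1 + (y k).2 ≤ (δ k).2 ∧
      -(x k) ^ 2 * (y k).2 - 0 ≤ γ k ∧
      (v k).1 * ((y k).2 - (δ k).1) = 0 ∧
      (v k).2 * (-(x k) * (y k).1 + (y k).2 - (δ k).2) = 0 ∧
      w k * (-(x k) ^ 2 * (y k).2 - 0 - γ k) = 0 ∧
      -- all perturbed active index sets are empty
      (y k).2 < (δ k).1 ∧
      -(x k) * (y k).1 + (y k).2 < (δ k).2 ∧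
      -(x k) ^ 2 * (y k).2 - 0 < γ k) ∧
    Tendsto x atTop (nhds 0) ∧
    Tendsto y atTop (nhds (0, 0)) ∧
    Tendsto δ atTop (nhds (0, 0)) ∧
    Tendsto γ atTop (nhds 0) ∧
    Tendsto ε atTop (nhds (0, 0, 0)) := by
  intro x y v w δ γ ε
  have hγ : Tendsto γ atTop (nhds 0) := tendsto_one_div_atTop_nhds_zero_nat
  refine ⟨fun k hk => ?_, tendsto_const_nhds,
    tendsto_const_nhds.prodMk_nhds (by simpa only [neg_zero] using hγ.neg),
    tendsto_const_nhds, hγ, tendsto_const_nhds⟩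
  have hk₀ : (0 : ℝ) < k := Nat.cast_pos.mpr hk
  simp [x, y, v, w, δ, γ, ε, hk₀]
end
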